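/- Let $u$ be a smooth divergence-free vector field on $\mathbb{R}^3 \times \mathbb{R}$ and let $q, \theta$ be smooth scalars both satisfying the transport equation $\partial_t f + u\cdot\nabla f = 0$. Then the vector field $B = \nabla q \times \nabla \theta$ satisfies the stretching equation $\partial_t B + (u\cdot\nabla)B = (B\cdot\nabla)u$. -/

import Mathlib

noncomputable section

/-- Points of physical space `ℝ³`. -/
abbrev V3 : Type := Fin 3 → ℝ

/-- Spatial partial derivative `∂_j f` at `x`. -/
def pd (f : V3 → ℝ) (j : Fin 3) (x : V3) : ℝ := fderiv ℝ f x (Pi.single j 1)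

/-- Cross product on `ℝ³`. -/
def cross3 (a b : V3) : V3 :=
  ![a 1 * b 2 - a 2 * b 1, a 2 * b 0 - a 0 * b 2, a 0 * b 1 - a 1 * b 0]

/-- Material derivative `D f / Dt = ∂_t f + u ⋅ ∇ f` at `(x, t)`. -/
def matD (u : Fin 3 → V3 → ℝ → ℝ) (f : V3 → ℝ → ℝ) (x : V3) (t : ℝ) : ℝ :=
  deriv (f x) t + ∑ j, u j x t * pd (fun y => f y t) j x

/-- The field `B = ∇q × ∇θ` built from two scalars. -/
def Bfield (q θ : V3 → ℝ → ℝ) (x : V3) (t : ℝ) : V3 :=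
  cross3 (fun j => pd (fun y => q y t) j x) (fun j => pd (fun y => θ y t) j x)

/-- spatial basis vectors in the full space -/
def ee (j : Fin 3) : V3 × ℝ := (Pi.single j 1, 0)

lemma pd_eq_full (f : V3 × ℝ → ℝ) (x : V3) (t : ℝ)
    (hf : DifferentiableAt ℝ f (x, t)) (j : Fin 3) :
    pd (fun y => f (y, t)) j x = fderiv ℝ f (x, t) (ee j) := by
  have h1 : HasFDerivAt (fun y : V3 => (y, t))
      ((ContinuousLinearMap.id ℝ V3).prod 0) x :=
    HasFDerivAt.prodMk (hasFDerivAt_id x) (hasFDerivAt_const t x)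
  have h2 := (hf.hasFDerivAt.comp x h1).fderiv
  simp only [pd]
  rw [show (fun y => f (y, t)) = f ∘ (fun y : V3 => (y, t)) from rfl, h2]
  rfl

lemma deriv_eq_full (f : V3 × ℝ → ℝ) (x : V3) (t : ℝ)
    (hf : DifferentiableAt ℝ f (x, t)) :
    deriv (fun s => f (x, s)) t = fderiv ℝ f (x, t) (0, 1) := by
  have h1 : HasDerivAt (fun s : ℝ => (x, s)) ((0 : V3), (1 : ℝ)) t :=
    HasDerivAt.prodMk (hasDerivAt_const t x) (hasDerivAt_id t)
  exact (hf.hasFDerivAt.comp_hasDerivAt t h1).deriv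

lemma pair_decomp (v : V3) (c : ℝ) :
    ((v, c) : V3 × ℝ) = ((0 : V3), c) + ∑ m, v m • ee m := by
  rw [Fin.sum_univ_three]
  simp only [ee, Prod.smul_mk, Prod.mk_add_mk]
  refine Prod.ext ?_ (by simp)
  funext j
  fin_cases j <;> simp [Pi.single_apply]

lemma apply_pair (L : (V3 × ℝ) →L[ℝ] ℝ) (v : V3) (c : ℝ) :
    L (v, c) = L (0, c) + ∑ m, v m * L (ee m) := by
  rw [pair_decomp v c, map_add, map_sum]
  simp [smul_eq_mul]

def wvec (u : Fin 3 → V3 → ℝ → ℝ) (p : V3 × ℝ) : V3 × ℝ := ((fun m => u m p.1 p.2), 1)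

lemma matD_eq (u : Fin 3 → V3 → ℝ → ℝ) (f : V3 → ℝ → ℝ) (x : V3) (t : ℝ)
    (hf : DifferentiableAt ℝ (fun p : V3 × ℝ => f p.1 p.2) (x, t)) :
    matD u f x t = fderiv ℝ (fun p : V3 × ℝ => f p.1 p.2) (x, t) (wvec u (x, t)) := by
  unfold matD wvec
  rw [apply_pair]
  congr 1
  · exact deriv_eq_full _ x t hf
  · exact Finset.sum_congr rfl fun j _ => by rw [pd_eq_full _ x t hf]

lemma key (u : Fin 3 → V3 → ℝ → ℝ)
    (hu : ∀ i, ContDiff ℝ (⊤ : ℕ∞) fun p : V3 × ℝ => u i p.1 p.2)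
    (f : V3 × ℝ → ℝ) (hf : ContDiff ℝ (⊤ : ℕ∞) f)
    (htrans : ∀ p : V3 × ℝ, fderiv ℝ f p (wvec u p) = 0)
    (j : Fin 3) (p0 : V3 × ℝ) :
    fderiv ℝ (fun p => fderiv ℝ f p (ee j)) p0 (wvec u p0)
      = -∑ m, fderiv ℝ (fun p : V3 × ℝ => u m p.1 p.2) p0 (ee j)
          * fderiv ℝ f p0 (ee m) := by
  have hG : ContDiff ℝ (⊤ : ℕ∞) (fderiv ℝ f) := hf.fderiv_right (by simp)
  have hGdiff : Differentiable ℝ (fderiv ℝ f) := hG.differentiable (by simp)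
  have hw : Differentiable ℝ (wvec u) := by
    apply Differentiable.prodMk
    · exact differentiable_pi.2 fun m => (hu m).differentiable (by simp)
    · exact differentiable_const 1
  -- differentiate the transport identity
  have h0 : ∀ v, fderiv ℝ (fderiv ℝ f) p0 v (wvec u p0)
      + fderiv ℝ f p0 (fderiv ℝ (wvec u) p0 v) = 0 := by
    intro v
    have hz : fderiv ℝ (fun p => fderiv ℝ f p (wvec u p)) p0 = 0 := by
      have : (fun p => fderiv ℝ f p (wvec u p)) = fun _ => (0 : ℝ) := funext htrans
      rw [this]; exact fderiv_const_apply 0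
    rw [fderiv_clm_apply (hGdiff p0) (hw p0)] at hz
    have := congrFun (congrArg DFunLike.coe hz) v
    simpa [add_comm] using this
  -- symmetry of the second derivative
  have hsym : IsSymmSndFDerivAt ℝ f p0 :=
    hf.contDiffAt.isSymmSndFDerivAt (by rw [minSmoothness_of_isRCLikeNormedField]; exact WithTop.coe_le_coe.2 (le_top : (2 : ℕ∞) ≤ ⊤))
  -- derivative of the map p ↦ (fderiv f p) (ee j)
  have h1 : fderiv ℝ (fun p => fderiv ℝ f p (ee j)) p0
      = (fderiv ℝ (fderiv ℝ f) p0).flip (ee j) := by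
    rw [fderiv_clm_apply (hGdiff p0) (differentiableAt_const _)]
    simp
  -- derivative of wvec
  have hwd : fderiv ℝ (wvec u) p0 (ee j)
      = ((fun m => fderiv ℝ (fun p : V3 × ℝ => u m p.1 p.2) p0 (ee j)), 0) := by
    have hasw : HasFDerivAt (wvec u)
        ((ContinuousLinearMap.pi
          (fun m => fderiv ℝ (fun p : V3 × ℝ => u m p.1 p.2) p0)).prod 0) p0 := by
      apply HasFDerivAt.prodMk
      · apply hasFDerivAt_pi''
        intro m
        rw [ContinuousLinearMap.proj_pi]
        exact (((hu m).differentiable (by simp)) p0).hasFDerivAt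
      · exact hasFDerivAt_const 1 p0
    rw [hasw.fderiv]; rfl
  rw [h1, ContinuousLinearMap.flip_apply, hsym.eq (wvec u p0) (ee j),
    eq_neg_of_add_eq_zero_left (h0 (ee j)), hwd]
  have := apply_pair (fderiv ℝ f p0) (fun m => fderiv ℝ (fun p : V3 × ℝ => u m p.1 p.2) p0 (ee j)) 0
  rw [this]
  simp
  exact (fderiv ℝ f p0).map_zero

lemma matD_eq' (u : Fin 3 → V3 → ℝ → ℝ) (f : V3 → ℝ → ℝ) (g : V3 × ℝ → ℝ)
    (x : V3) (t : ℝ) (hfg : ∀ y s, f y s = g (y, s))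
    (hg : DifferentiableAt ℝ g (x, t)) :
    matD u f x t = fderiv ℝ g (x, t) (wvec u (x, t)) := by
  have hf : f = fun y s => g (y, s) := funext fun y => funext fun s => hfg y s
  rw [hf]
  exact matD_eq u _ x t hg

lemma transport_full (u : Fin 3 → V3 → ℝ → ℝ) (q : V3 → ℝ → ℝ)
    (hq : ContDiff ℝ (⊤ : ℕ∞) fun p : V3 × ℝ => q p.1 p.2)
    (hqtrans : ∀ x t, matD u q x t = 0) (p : V3 × ℝ) :
    fderiv ℝ (fun p : V3 × ℝ => q p.1 p.2) p (wvec u p) = 0 := by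
  rw [show p = (p.1, p.2) from rfl]
  exact matD_eq u q p.1 p.2 ((hq.differentiable (by simp)) (p.1, p.2)) ▸ hqtrans p.1 p.2

lemma matD_B (u : Fin 3 → V3 → ℝ → ℝ) (q θ : V3 → ℝ → ℝ)
    (hu : ∀ i, ContDiff ℝ (⊤ : ℕ∞) fun p : V3 × ℝ => u i p.1 p.2)
    (hq : ContDiff ℝ (⊤ : ℕ∞) fun p : V3 × ℝ => q p.1 p.2)
    (hθ : ContDiff ℝ (⊤ : ℕ∞) fun p : V3 × ℝ => θ p.1 p.2)
    (hqtrans : ∀ x t, matD u q x t = 0)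
    (hθtrans : ∀ x t, matD u θ x t = 0)
    (a b : Fin 3) (x : V3) (t : ℝ) :
    matD u (fun y s => pd (fun y' => q y' s) a y * pd (fun y' => θ y' s) b y
        - pd (fun y' => q y' s) b y * pd (fun y' => θ y' s) a y) x t
      = (-∑ m, fderiv ℝ (fun p : V3 × ℝ => u m p.1 p.2) (x, t) (ee a)
            * fderiv ℝ (fun p : V3 × ℝ => q p.1 p.2) (x, t) (ee m))
          * fderiv ℝ (fun p : V3 × ℝ => θ p.1 p.2) (x, t) (ee b)
        + fderiv ℝ (fun p : V3 × ℝ => q p.1 p.2) (x, t) (ee a)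
          * (-∑ m, fderiv ℝ (fun p : V3 × ℝ => u m p.1 p.2) (x, t) (ee b)
            * fderiv ℝ (fun p : V3 × ℝ => θ p.1 p.2) (x, t) (ee m))
        - ((-∑ m, fderiv ℝ (fun p : V3 × ℝ => u m p.1 p.2) (x, t) (ee b)
            * fderiv ℝ (fun p : V3 × ℝ => q p.1 p.2) (x, t) (ee m))
          * fderiv ℝ (fun p : V3 × ℝ => θ p.1 p.2) (x, t) (ee a)
        + fderiv ℝ (fun p : V3 × ℝ => q p.1 p.2) (x, t) (ee b)
          * (-∑ m, fderiv ℝ (fun p : V3 × ℝ => u m p.1 p.2) (x, t) (ee a)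
            * fderiv ℝ (fun p : V3 × ℝ => θ p.1 p.2) (x, t) (ee m))) := by
  have hqd : ∀ j : Fin 3,
      ContDiff ℝ (⊤ : ℕ∞) (fun p : V3 × ℝ => fderiv ℝ (fun p' : V3 × ℝ => q p'.1 p'.2) p (ee j)) :=
    fun j => (hq.fderiv_right (by simp)).clm_apply contDiff_const
  have hθd : ∀ j : Fin 3,
      ContDiff ℝ (⊤ : ℕ∞) (fun p : V3 × ℝ => fderiv ℝ (fun p' : V3 × ℝ => θ p'.1 p'.2) p (ee j)) :=
    fun j => (hθ.fderiv_right (by simp)).clm_apply contDiff_const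
  have hfg : ∀ (y : V3) (s : ℝ),
      (pd (fun y' => q y' s) a y * pd (fun y' => θ y' s) b y
        - pd (fun y' => q y' s) b y * pd (fun y' => θ y' s) a y)
      = (fun p : V3 × ℝ =>
          fderiv ℝ (fun p' : V3 × ℝ => q p'.1 p'.2) p (ee a)
            * fderiv ℝ (fun p' : V3 × ℝ => θ p'.1 p'.2) p (ee b)
          - fderiv ℝ (fun p' : V3 × ℝ => q p'.1 p'.2) p (ee b)
            * fderiv ℝ (fun p' : V3 × ℝ => θ p'.1 p'.2) p (ee a)) (y, s) := by
    intro y s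
    rw [pd_eq_full _ y s ((hq.differentiable (by simp)) (y, s)),
        pd_eq_full _ y s ((hq.differentiable (by simp)) (y, s)),
        pd_eq_full _ y s ((hθ.differentiable (by simp)) (y, s)),
        pd_eq_full _ y s ((hθ.differentiable (by simp)) (y, s))]
  rw [matD_eq' u _ _ x t hfg
      (((((hqd a).differentiable (by simp)) _).mul (((hθd b).differentiable (by simp)) _)).sub
       ((((hqd b).differentiable (by simp)) _).mul (((hθd a).differentiable (by simp)) _)))]
  rw [fderiv_sub (((hqd a).differentiable (by simp) _).mul ((hθd b).differentiable (by simp) _))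
        (((hqd b).differentiable (by simp) _).mul ((hθd a).differentiable (by simp) _)),
      fderiv_mul ((hqd a).differentiable (by simp) _) ((hθd b).differentiable (by simp) _),
      fderiv_mul ((hqd b).differentiable (by simp) _) ((hθd a).differentiable (by simp) _)]
  simp only [ContinuousLinearMap.sub_apply, ContinuousLinearMap.add_apply,
    ContinuousLinearMap.smul_apply, smul_eq_mul]
  rw [key u hu _ hq (transport_full u q hq hqtrans) a (x, t),
      key u hu _ hq (transport_full u q hq hqtrans) b (x, t),
      key u hu _ hθ (transport_full u θ hθ hθtrans) a (x, t),
      key u hu _ hθ (transport_full u θ hθ hθtrans) b (x, t)]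
  ring

/-- (Moiseev–Sagdeev–Tur–Yanovskii): if `q` and `θ` are smooth scalars passively
transported by a smooth divergence-free field `u`, then `B = ∇q × ∇θ` satisfies
the vortex-stretching equation `∂_t B + (u⋅∇)B = (B⋅∇)u`. -/
theorem B_stretching (u : Fin 3 → V3 → ℝ → ℝ) (q θ : V3 → ℝ → ℝ)
    (hu : ∀ i, ContDiff ℝ (⊤ : ℕ∞) (fun p : V3 × ℝ => u i p.1 p.2))
    (hq : ContDiff ℝ (⊤ : ℕ∞) (fun p : V3 × ℝ => q p.1 p.2))
    (hθ : ContDiff ℝ (⊤ : ℕ∞) (fun p : V3 × ℝ => θ p.1 p.2))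
    (hdiv : ∀ x t, (∑ i, pd (fun y => u i y t) i x) = 0)
    (hqtrans : ∀ x t, matD u q x t = 0)
    (hθtrans : ∀ x t, matD u θ x t = 0) :
    ∀ (i : Fin 3) (x : V3) (t : ℝ),
      matD u (fun y s => Bfield q θ y s i) x t
        = ∑ j, Bfield q θ x t j * pd (fun y => u i y t) j x := by
  intro i x t
  have hpq : ∀ j, pd (fun y => q y t) j x
      = fderiv ℝ (fun p : V3 × ℝ => q p.1 p.2) (x, t) (ee j) :=
    fun j => pd_eq_full _ x t ((hq.differentiable (by simp)) (x, t)) j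
  have hpθ : ∀ j, pd (fun y => θ y t) j x
      = fderiv ℝ (fun p : V3 × ℝ => θ p.1 p.2) (x, t) (ee j) :=
    fun j => pd_eq_full _ x t ((hθ.differentiable (by simp)) (x, t)) j
  have hpu : ∀ (m : Fin 3) j, pd (fun y => u m y t) j x
      = fderiv ℝ (fun p : V3 × ℝ => u m p.1 p.2) (x, t) (ee j) :=
    fun m j => pd_eq_full _ x t (((hu m).differentiable (by simp)) (x, t)) j
  have hdiv' := hdiv x t
  rw [Fin.sum_univ_three] at hdiv'
  simp only [hpu] at hdiv'
  have h00 : fderiv ℝ (fun p : V3 × ℝ => u 0 p.1 p.2) (x, t) (ee 0)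
      = -fderiv ℝ (fun p : V3 × ℝ => u 1 p.1 p.2) (x, t) (ee 1)
        - fderiv ℝ (fun p : V3 × ℝ => u 2 p.1 p.2) (x, t) (ee 2) := by linarith
  fin_cases i
  · show matD u (fun y s => Bfield q θ y s 0) x t
        = ∑ j, Bfield q θ x t j * pd (fun y => u 0 y t) j x
    rw [show (fun y s => Bfield q θ y s 0) = (fun y s =>
        pd (fun y' => q y' s) 1 y * pd (fun y' => θ y' s) 2 y
          - pd (fun y' => q y' s) 2 y * pd (fun y' => θ y' s) 1 y) from
      funext fun y => funext fun s => by simp [Bfield, cross3]]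
    rw [matD_B u q θ hu hq hθ hqtrans hθtrans 1 2 x t]
    simp only [Fin.sum_univ_three, Bfield, cross3, Matrix.cons_val_zero, Matrix.cons_val_one,
      Matrix.head_cons, Matrix.cons_val_two, Matrix.tail_cons, hpq, hpθ, hpu]
    rw [h00]; ring
  · show matD u (fun y s => Bfield q θ y s 1) x t
        = ∑ j, Bfield q θ x t j * pd (fun y => u 1 y t) j x
    rw [show (fun y s => Bfield q θ y s 1) = (fun y s =>
        pd (fun y' => q y' s) 2 y * pd (fun y' => θ y' s) 0 y
          - pd (fun y' => q y' s) 0 y * pd (fun y' => θ y' s) 2 y) from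
      funext fun y => funext fun s => by simp [Bfield, cross3]]
    rw [matD_B u q θ hu hq hθ hqtrans hθtrans 2 0 x t]
    simp only [Fin.sum_univ_three, Bfield, cross3, Matrix.cons_val_zero, Matrix.cons_val_one,
      Matrix.head_cons, Matrix.cons_val_two, Matrix.tail_cons, hpq, hpθ, hpu]
    rw [h00]; ring
  · show matD u (fun y s => Bfield q θ y s 2) x t
        = ∑ j, Bfield q θ x t j * pd (fun y => u 2 y t) j x
    rw [show (fun y s => Bfield q θ y s 2) = (fun y s =>
        pd (fun y' => q y' s) 0 y * pd (fun y' => θ y' s) 1 y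
          - pd (fun y' => q y' s) 1 y * pd (fun y' => θ y' s) 0 y) from
      funext fun y => funext fun s => by simp [Bfield, cross3]]
    rw [matD_B u q θ hu hq hθ hqtrans hθtrans 0 1 x t]
    simp only [Fin.sum_univ_three, Bfield, cross3, Matrix.cons_val_zero, Matrix.cons_val_one,
      Matrix.head_cons, Matrix.cons_val_two, Matrix.tail_cons, hpq, hpθ, hpu]
    rw [h00]; ring
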